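/- arXiv:1506.04411 — 4 statements merged into one kernel-verified Lean document; each statement's English description precedes it below -/
import Mathlib

section
/- Fix n ≥ 1. Let S = ℚ[t₁, …, tₙ] and R = ℚ[t₁, …, tₙ, z₁, …, zₙ] be polynomial rings, and let I ⊆ R be the ideal generated by eₖ(z₁, …, zₙ) − eₖ(t₁, …, tₙ) for k = 1, …, n, where eₖ is the k-th elementary symmetric polynomial. For each permutation w in the symmetric group Sₙ, let ev_w : R/I → S be the ℚ-algebra homomorphism induced by tᵢ ↦ tᵢ and zᵢ ↦ t_{w(i)} (this is well-defined since each generator of I maps to 0). Then the ring homomorphism L : R/I → ∏_{w ∈ Sₙ} S whose w-th component is ev_w is injective. -/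
/-!
In `R/I` the polynomials `∏ (X - tᵢ)` and `∏ (X - zᵢ)` have the same coefficients `± eₖ`, so
`∏_{j ≥ k} (X - z_j)`, the quotient of `∏ (X - tᵢ)` by `∏_{j < k} (X - z_j)`, is a monic polynomial
of degree `n - k` with coefficients in `ℚ[t][z_j : j < k]` vanishing at `z_k`. Adjoining
`z_0, z_1, …` in turn shows that `R/I` is spanned over `ℚ[t]` by the `n!` staircase monomials
`z^a`, `aᵢ < n - i`. An element `∑ c_a z^a` killed by every `ev_w` gives
`∑ c_a ∏ t_{w(i)}^{aᵢ} = 0` for all `w`; this square `n! × n!` system is nonsingular, since its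
transpose is injective by induction on `n`: fixing `w(0)` leaves a Vandermonde system in the `tᵢ`.
-/

open MvPolynomial

/-- The ideal of `ℚ[t₁,…,tₙ,z₁,…,zₙ]` generated by `eₖ(z) − eₖ(t)` for `k = 1, …, n`, where the
`t`-variables are indexed by `Sum.inl` and the `z`-variables by `Sum.inr`. -/
noncomputable def borelIdeal (n : ℕ) : Ideal (MvPolynomial (Fin n ⊕ Fin n) ℚ) :=
  Ideal.span (Set.range fun k : Fin n =>
    rename Sum.inr (esymm (Fin n) ℚ ((k : ℕ) + 1)) -
    rename Sum.inl (esymm (Fin n) ℚ ((k : ℕ) + 1)))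

/-- `ev` is the family of localization maps: for each permutation `w`, `ev w` is the `ℚ`-algebra
homomorphism `R/I → S` induced by `tᵢ ↦ tᵢ` and `zᵢ ↦ t_{w(i)}`. -/
def IsLocalizationFamily (n : ℕ)
    (ev : Equiv.Perm (Fin n) →
      (MvPolynomial (Fin n ⊕ Fin n) ℚ ⧸ borelIdeal n) →ₐ[ℚ] MvPolynomial (Fin n) ℚ) : Prop :=
  ∀ (w : Equiv.Perm (Fin n)) (i : Fin n),
    ev w (Ideal.Quotient.mk (borelIdeal n) (X (Sum.inl i))) = X i ∧
    ev w (Ideal.Quotient.mk (borelIdeal n) (X (Sum.inr i))) = X (w i)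

open Equiv Matrix

theorem eq_zero_of_forall_sum_pow_mul_eq_zero {A : Type*} [CommRing A] [IsDomain A] {n : ℕ}
    {x : Fin n → A} (hx : Function.Injective x) {v : Fin n → A}
    (hv : ∀ m < n, ∑ k, x k ^ m * v k = 0) : v = 0 :=
  Matrix.eq_zero_of_vecMul_eq_zero (Matrix.det_vandermonde_ne_zero_iff.2 hx) <| funext fun m => by
    simpa [Matrix.vecMul, dotProduct, mul_comm] using hv m m.isLt

theorem eq_zero_of_forall_sum_perm_mul_prod_pow_eq_zero {A : Type*} [CommRing A] [IsDomain A] :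
    ∀ {n : ℕ} {x : Fin n → A}, Function.Injective x → ∀ {d : Perm (Fin n) → A},
      (∀ a : Fin n → ℕ, (∀ i, a i + i < n) → ∑ w, d w * ∏ i, x (w i) ^ a i = 0) → d = 0
  | 0, _, _, d, hd => funext fun w => by
    simpa [Subsingleton.elim w 1] using hd 0 (fun i => i.elim0)
  | n + 1, x, hx, d, hd => by
    let y (k : Fin (n + 1)) (i : Fin n) : A := x (swap 0 k i.succ)
    have hy (k) : Function.Injective (y k) := fun i j h =>
      Fin.succ_injective _ ((swap 0 k).injective (hx h))
    -- Write `w = (w 0, e)`. For fixed exponents `a` on the other positions, the hypotheses for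
    -- all exponents `m < n + 1` at position `0` form a Vandermonde system in the values `x (w 0)`.
    suffices ∀ k, (fun e => d (Perm.decomposeFin.symm (k, e))) = 0 by
      funext w
      simpa using congrFun (this (Perm.decomposeFin w).1) (Perm.decomposeFin w).2
    intro k
    refine eq_zero_of_forall_sum_perm_mul_prod_pow_eq_zero (hy k) fun a ha => ?_
    refine congrFun (eq_zero_of_forall_sum_pow_mul_eq_zero hx (v := fun k =>
      ∑ e, d (Perm.decomposeFin.symm (k, e)) * ∏ i, y k (e i) ^ a i) fun m hm => ?_) k
    rw [← hd (Fin.cons m a) (Fin.cases (by simpa [Nat.lt_succ_iff] using hm) fun i => by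
      simpa [← add_assoc] using ha i),
      ← Perm.decomposeFin.symm.sum_comp, Fintype.sum_prod_type]
    simp [y, Finset.mul_sum, Fin.prod_univ_succ, Perm.decomposeFin_symm_apply_succ, mul_left_comm]

theorem Matrix.eq_zero_of_mulVec_eq_zero_of_card_eq {A m n : Type*} [CommRing A] [IsDomain A]
    [Fintype m] [Fintype n] [DecidableEq m] {M : Matrix m n A}
    (hcard : Fintype.card m = Fintype.card n)
    (hM : ∀ d, d ᵥ* M = 0 → d = 0) {c : n → A} (hc : M *ᵥ c = 0) : c = 0 := by
  let e := Fintype.equivOfCardEq hcard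
  have hdet : (M.submatrix id e).det ≠ 0 := fun h => by
    obtain ⟨d, hd0, hd⟩ := Matrix.exists_vecMul_eq_zero_iff.2 h
    refine hd0 (hM d (funext fun j => ?_))
    simpa [Matrix.vecMul, dotProduct] using congrFun hd (e.symm j)
  have := Matrix.eq_zero_of_mulVec_eq_zero hdet (v := c ∘ e) (by
    rw [Matrix.submatrix_mulVec_equiv]; simp [Function.comp_assoc, hc])
  funext j
  simpa using congrFun this (e.symm j)

abbrev Staircase (n : ℕ) := ∀ i : Fin n, Fin (n - i)

theorem card_staircase (n : ℕ) : Fintype.card (Staircase n) = n.factorial := by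
  rw [Fintype.card_pi]
  simp only [Fintype.card_fin]
  rw [Fin.prod_univ_eq_prod_range (fun i => n - i), ← Nat.descFactorial_eq_prod_range,
    Nat.descFactorial_self]

theorem eq_zero_of_forall_sum_staircase_mul_prod_pow_eq_zero {A : Type*} [CommRing A] [IsDomain A]
    {n : ℕ} {x : Fin n → A} (hx : Function.Injective x) {c : Staircase n → A}
    (hc : ∀ w : Perm (Fin n), ∑ a, c a * ∏ i, x (w i) ^ (a i : ℕ) = 0) : c = 0 := by
  let M : Matrix (Perm (Fin n)) (Staircase n) A := fun w a => ∏ i, x (w i) ^ (a i : ℕ)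
  refine M.eq_zero_of_mulVec_eq_zero_of_card_eq
    (by rw [card_staircase, Fintype.card_perm, Fintype.card_fin]) (fun d hd => ?_)
    (funext fun w => by simpa [M, Matrix.mulVec, dotProduct, mul_comm] using hc w)
  exact eq_zero_of_forall_sum_perm_mul_prod_pow_eq_zero hx fun a ha =>
    congrFun hd fun i => ⟨a i, by have := ha i; omega⟩

section

open Polynomial
open scoped Pointwise

theorem Polynomial.prod_X_sub_C_eq_of_aeval_esymm_eq {σ R S : Type*} [Fintype σ] [CommRing R]
    [CommRing S] [Algebra R S] {f g : σ → S}
    (h : ∀ k ≤ Fintype.card σ,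
      MvPolynomial.aeval f (esymm σ R k) = MvPolynomial.aeval g (esymm σ R k)) :
    ∏ i, (X - C (f i)) = ∏ i, (X - C (g i)) := by
  have vieta (f : σ → S) : ∏ i, (X - C (f i)) = ∑ k ∈ Finset.range (Fintype.card σ + 1),
      (-1) ^ k * (C (MvPolynomial.aeval f (esymm σ R k)) * X ^ (Fintype.card σ - k)) := by
    simp_rw [aeval_esymm_eq_multiset_esymm, Finset.prod_eq_multiset_prod]
    rw [← Function.comp_def (fun x => X - C x) f, ← Multiset.map_map,
      Multiset.prod_X_sub_X_eq_sum_esymm]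
    simp
  rw [vieta, vieta]
  exact Finset.sum_congr rfl fun k hk => by rw [h k (Nat.lt_succ_iff.1 (Finset.mem_range.1 hk))]

theorem Polynomial.natDegree_prod_X_sub_C_le {ι R : Type*} [CommRing R] (s : Finset ι)
    (f : ι → R) : (∏ j ∈ s, (X - C (f j))).natDegree ≤ s.card :=
  (natDegree_prod_le _ _).trans <| by
    simpa using Finset.sum_le_sum fun j (_ : j ∈ s) => natDegree_X_sub_C_le (f j)

theorem Polynomial.divByMonic_mem_lifts {R S : Type*} [CommRing R] [CommRing S] {f : R →+* S}
    {p q : S[X]} (hp : p ∈ lifts f) (hq : q ∈ lifts f) (hmonic : q.Monic) : p /ₘ q ∈ lifts f := by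
  obtain ⟨p', rfl⟩ := (mem_lifts p).1 hp
  obtain ⟨q', rfl, -, hq'⟩ := lifts_and_natDegree_eq_and_monic hq hmonic
  exact (mem_lifts _).2 ⟨p' /ₘ q', map_divByMonic f hq'⟩

theorem Polynomial.X_sub_C_mem_lifts {R B : Type*} [CommRing R] [CommRing B] [Algebra R B]
    {A : Subalgebra R B} {a : B} (ha : a ∈ A) : X - C a ∈ lifts (algebraMap A B) :=
  (mem_lifts _).2 ⟨X - C (⟨a, ha⟩ : A), by simp⟩

theorem Polynomial.coeff_prod_X_sub_C_compl_mem {R B ι κ : Type*} [CommRing R] [CommRing B]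
    [Algebra R B] [Fintype ι] [Fintype κ] [DecidableEq κ] {A : Subalgebra R B} {u : ι → B}
    {v : κ → B} (huv : ∏ i, (X - C (u i)) = ∏ j, (X - C (v j))) (hu : ∀ i, u i ∈ A)
    {s : Finset κ} (hv : ∀ j ∈ s, v j ∈ A) (m : ℕ) : (∏ j ∈ sᶜ, (X - C (v j))).coeff m ∈ A := by
  have hmonic : (∏ j ∈ s, (X - C (v j))).Monic := monic_prod_of_monic _ _ fun j _ => monic_X_sub_C _
  have hlifts : ∏ j ∈ sᶜ, (X - C (v j)) ∈ lifts (algebraMap A B) := by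
    rw [← mul_divByMonic_cancel_left (∏ j ∈ sᶜ, (X - C (v j))) hmonic, Finset.prod_mul_prod_compl,
      ← huv]
    exact divByMonic_mem_lifts (R := A) (Subsemiring.prod_mem _ fun i _ => X_sub_C_mem_lifts (hu i))
      (Subsemiring.prod_mem _ fun j hj => X_sub_C_mem_lifts (hv j hj)) hmonic
  obtain ⟨c, hc⟩ := (lifts_iff_coeff_lifts _).1 hlifts m
  exact hc ▸ c.2

theorem Algebra.adjoin_insert_le_span_mul {A B : Type*} [CommRing A] [CommRing B] [Algebra A B]
    {s M : Set B} (hM : Subalgebra.toSubmodule (adjoin A s) ≤ Submodule.span A M) {x : B}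
    {f : B[X]} (hf : f.Monic) (hcoeff : ∀ m, f.coeff m ∈ adjoin A s) (hfx : f.eval x = 0) :
    Subalgebra.toSubmodule (adjoin A (insert x s)) ≤
      Submodule.span A (M * (x ^ ·) '' Set.Iio f.natDegree) := by
  set C := adjoin A s
  obtain ⟨g, hgf, hgdeg, hg⟩ := lifts_and_natDegree_eq_and_monic
    ((lifts_iff_coeff_lifts (f := algebraMap C B) f).2 fun m => ⟨⟨_, hcoeff m⟩, rfl⟩) hf
  have hgx : aeval x g = 0 := by rw [Polynomial.aeval_def, Polynomial.eval₂_eq_eval_map, hgf, hfx]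
  suffices ∀ y ∈ Subalgebra.toSubmodule (adjoin C {x}), ∀ c ∈ C,
      c * y ∈ Submodule.span A (M * (x ^ ·) '' Set.Iio f.natDegree) by
    intro y hy
    rw [Subalgebra.mem_toSubmodule, Set.insert_eq, Set.union_comm,
      adjoin_union_eq_adjoin_adjoin, Subalgebra.mem_restrictScalars] at hy
    simpa using this y hy 1 C.one_mem
  rw [← Submodule.span_range_natDegree_eq_adjoin hg hgx]
  -- Strengthened to `c * y` for all `c ∈ C`, so that the `C`-scalar step of the induction closes.
  intro y hy
  induction hy using Submodule.span_induction with
  | mem y hy =>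
    intro c hc
    obtain ⟨e, he, rfl⟩ := by simpa using hy
    rw [← Submodule.span_mul_span]
    exact Submodule.mul_mem_mul (hM hc) (Submodule.subset_span ⟨e, by simpa [hgdeg] using he, rfl⟩)
  | zero => simp
  | add y z _ _ hy hz => intro c hc; rw [mul_add]; exact add_mem (hy c hc) (hz c hc)
  | smul c' y _ hy =>
    intro c hc
    rw [Subalgebra.smul_def, smul_eq_mul, ← mul_assoc]
    exact hy _ (C.mul_mem hc c'.2)

theorem Algebra.adjoin_range_le_span_prod_pow {A B : Type*} [CommRing A] [CommRing B]
    [Algebra A B] : ∀ {n : ℕ} (x : Fin n → B) (d : Fin n → ℕ),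
    (∀ k, ∃ f : B[X], f.Monic ∧ f.natDegree ≤ d k ∧
      (∀ m, f.coeff m ∈ adjoin A (x '' Set.Iio k)) ∧ f.eval (x k) = 0) →
    Subalgebra.toSubmodule (adjoin A (Set.range x)) ≤
      Submodule.span A (Set.range fun a : (∀ i, Fin (d i)) => ∏ i, x i ^ (a i : ℕ))
  | 0, x, d, _ => by
    simp [Set.range_eq_empty, Algebra.toSubmodule_bot, Submodule.one_eq_span]
  | n + 1, x, d, hx => by
    obtain ⟨f, hf, hfd, hcoeff, hfx⟩ := hx (Fin.last n)
    have ih := adjoin_range_le_span_prod_pow (x ∘ Fin.castSucc) (d ∘ Fin.castSucc) fun k => by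
      obtain ⟨f, hf, hfd, hcoeff, hfx⟩ := hx k.castSucc
      exact ⟨f, hf, hfd, by rwa [Set.image_comp, Fin.image_castSucc_Iio], hfx⟩
    have hrange : Set.range x = insert (x (Fin.last n)) (Set.range (x ∘ Fin.castSucc)) := by
      conv_lhs => rw [← Fin.snoc_init_self x]
      rw [Fin.range_snoc]; rfl
    have hcoeff' (m : ℕ) : f.coeff m ∈ adjoin A (Set.range (x ∘ Fin.castSucc)) := by
      refine adjoin_mono ?_ (hcoeff m)
      rintro _ ⟨j, hj, rfl⟩
      exact ⟨j.castLT hj, congrArg x (Fin.castSucc_castLT _ _)⟩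
    rw [hrange]
    refine (adjoin_insert_le_span_mul ih hf hcoeff' hfx).trans (Submodule.span_mono ?_)
    rintro _ ⟨_, ⟨a, rfl⟩, _, ⟨e, he, rfl⟩, rfl⟩
    refine ⟨Fin.snoc a ⟨e, lt_of_lt_of_le he hfd⟩, ?_⟩
    simp [Fin.prod_univ_castSucc]

end

abbrev BorelQuotient (n : ℕ) := MvPolynomial (Fin n ⊕ Fin n) ℚ ⧸ borelIdeal n

namespace BorelQuotient

variable {n : ℕ}

noncomputable def t (i : Fin n) : BorelQuotient n := Ideal.Quotient.mk _ (X (Sum.inl i))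

noncomputable def z (i : Fin n) : BorelQuotient n := Ideal.Quotient.mk _ (X (Sum.inr i))

theorem aeval_t : aeval t = (Ideal.Quotient.mkₐ ℚ (borelIdeal n)).comp (rename Sum.inl) :=
  algHom_ext fun i => by simp [t]

theorem aeval_z : aeval z = (Ideal.Quotient.mkₐ ℚ (borelIdeal n)).comp (rename Sum.inr) :=
  algHom_ext fun i => by simp [z]

theorem aeval_t_esymm_eq_aeval_z_esymm {k : ℕ} (hk : k ≤ n) :
    aeval t (esymm (Fin n) ℚ k) = aeval z (esymm (Fin n) ℚ k) := by
  obtain _ | k := k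
  · simp [esymm_zero]
  rw [aeval_t, aeval_z, AlgHom.comp_apply, AlgHom.comp_apply, Ideal.Quotient.mkₐ_eq_mk,
    Ideal.Quotient.eq, ← neg_mem_iff, neg_sub]
  exact Ideal.subset_span ⟨⟨k, hk⟩, rfl⟩

noncomputable def evalPerm (w : Equiv.Perm (Fin n)) :
    MvPolynomial (Fin n ⊕ Fin n) ℚ →ₐ[ℚ] MvPolynomial (Fin n) ℚ :=
  aeval (Sum.elim X fun i => X (w i))

theorem borelIdeal_le_ker_evalPerm (w : Equiv.Perm (Fin n)) :
    borelIdeal n ≤ RingHom.ker (evalPerm w) := by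
  have hinl : (evalPerm w).comp (rename Sum.inl) = AlgHom.id ℚ _ :=
    algHom_ext fun i => by simp [evalPerm]
  have hinr : (evalPerm w).comp (rename Sum.inr) = rename w :=
    algHom_ext fun i => by simp [evalPerm]
  rw [borelIdeal, Ideal.span_le]
  rintro _ ⟨k, rfl⟩
  rw [SetLike.mem_coe, RingHom.mem_ker, map_sub, ← AlgHom.comp_apply, ← AlgHom.comp_apply, hinl,
    hinr, rename_esymm, AlgHom.id_apply, sub_self]

noncomputable def ev (w : Equiv.Perm (Fin n)) : BorelQuotient n →ₐ[ℚ] MvPolynomial (Fin n) ℚ :=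
  Ideal.Quotient.liftₐ _ (evalPerm w) fun _ hp =>
    RingHom.mem_ker.1 (borelIdeal_le_ker_evalPerm w hp)

theorem ev_mk (w : Equiv.Perm (Fin n)) (p : MvPolynomial (Fin n ⊕ Fin n) ℚ) :
    ev w (Ideal.Quotient.mk _ p) = evalPerm w p :=
  Ideal.Quotient.liftₐ_apply _ _ _ _

@[simp]
theorem ev_t (w : Equiv.Perm (Fin n)) (i : Fin n) : ev w (t i) = X i := by
  rw [t, ev_mk]
  simp [evalPerm]

@[simp]
theorem ev_z (w : Equiv.Perm (Fin n)) (i : Fin n) : ev w (z i) = X (w i) := by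
  rw [z, ev_mk]
  simp [evalPerm]

theorem ev_comp_aeval_t (w : Equiv.Perm (Fin n)) : (ev w).comp (aeval t) = AlgHom.id ℚ _ :=
  algHom_ext fun i => by simp

noncomputable def tSubalgebra (n : ℕ) : Subalgebra ℚ (BorelQuotient n) := (aeval t).range

theorem t_mem_tSubalgebra (i : Fin n) : t i ∈ tSubalgebra n :=
  ⟨X i, aeval_X _ _⟩

theorem mem_adjoin_of_mem_tSubalgebra {y : BorelQuotient n} (hy : y ∈ tSubalgebra n)
    (s : Set (BorelQuotient n)) : y ∈ Algebra.adjoin (tSubalgebra n) s :=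
  Subalgebra.algebraMap_mem _ (⟨y, hy⟩ : tSubalgebra n)

section

open Polynomial hiding X C

theorem prod_X_sub_C_t_eq_prod_X_sub_C_z :
    ∏ i, (Polynomial.X - Polynomial.C (t i)) =
      ∏ i, (Polynomial.X - Polynomial.C (z i) : (BorelQuotient n)[X]) :=
  prod_X_sub_C_eq_of_aeval_esymm_eq fun _ hk => aeval_t_esymm_eq_aeval_z_esymm (by simpa using hk)

theorem exists_monic_of_eval_z_eq_zero (k : Fin n) :
    ∃ f : (BorelQuotient n)[X], f.Monic ∧ f.natDegree ≤ n - k ∧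
      (∀ m, f.coeff m ∈ Algebra.adjoin (tSubalgebra n) (z '' Set.Iio k)) ∧ f.eval (z k) = 0 := by
  refine ⟨∏ j ∈ (Finset.Iio k)ᶜ, (Polynomial.X - Polynomial.C (z j)),
    monic_prod_of_monic _ _ fun j _ => monic_X_sub_C _, ?_, ?_, ?_⟩
  · exact (natDegree_prod_X_sub_C_le _ _).trans_eq
      (by rw [Finset.card_compl, Fintype.card_fin, Fin.card_Iio])
  · exact coeff_prod_X_sub_C_compl_mem (A := Algebra.adjoin (tSubalgebra n) (z '' Set.Iio k))
      prod_X_sub_C_t_eq_prod_X_sub_C_z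
      (fun i => mem_adjoin_of_mem_tSubalgebra (t_mem_tSubalgebra i) _)
      fun j hj => Algebra.subset_adjoin ⟨j, Finset.mem_Iio.1 hj, rfl⟩
  · rw [Polynomial.eval_prod]
    exact Finset.prod_eq_zero (i := k) (by simp) (by simp)

end

theorem adjoin_range_z_eq_top : Algebra.adjoin (tSubalgebra n) (Set.range (z (n := n))) = ⊤ := by
  refine Algebra.eq_top_iff.2 fun y => ?_
  obtain ⟨p, rfl⟩ := Ideal.Quotient.mk_surjective y
  induction p using MvPolynomial.induction_on with
  | C a =>
    rw [← algebraMap_eq, Ideal.Quotient.mk_algebraMap]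
    exact mem_adjoin_of_mem_tSubalgebra (Subalgebra.algebraMap_mem _ a) _
  | add p q hp hq => rw [map_add]; exact add_mem hp hq
  | mul_X p i hp =>
    rw [map_mul]
    refine mul_mem hp ?_
    obtain j | j := i
    · exact mem_adjoin_of_mem_tSubalgebra (t_mem_tSubalgebra j) _
    · exact Algebra.subset_adjoin ⟨j, rfl⟩

theorem span_staircase_eq_top :
    Submodule.span (tSubalgebra n) (Set.range fun a : Staircase n => ∏ i, z i ^ (a i : ℕ)) = ⊤ := by
  refine eq_top_iff.2 ?_
  calc ⊤ = Subalgebra.toSubmodule (Algebra.adjoin (tSubalgebra n) (Set.range z)) := by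
        rw [adjoin_range_z_eq_top, Algebra.top_toSubmodule]
    _ ≤ _ := Algebra.adjoin_range_le_span_prod_pow z (fun i => n - i) exists_monic_of_eval_z_eq_zero

theorem eq_zero_of_forall_ev_eq_zero {y : BorelQuotient n} (hy : ∀ w, ev w y = 0) : y = 0 := by
  obtain ⟨c, rfl⟩ := (Submodule.mem_span_range_iff_exists_fun _).1
    (span_staircase_eq_top ▸ Submodule.mem_top : y ∈ Submodule.span (tSubalgebra n) _)
  choose s hs using fun a => (c a).2
  have hs0 : s = 0 := eq_zero_of_forall_sum_staircase_mul_prod_pow_eq_zero X_injective fun w => by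
    simpa [Subalgebra.smul_def, ← hs, ← AlgHom.comp_apply, ev_comp_aeval_t] using hy w
  simp [Subalgebra.smul_def, ← hs, hs0]

end BorelQuotient

theorem localization_injective_general (n : ℕ) :
    ∃ ev : Equiv.Perm (Fin n) →
      (MvPolynomial (Fin n ⊕ Fin n) ℚ ⧸ borelIdeal n) →ₐ[ℚ] MvPolynomial (Fin n) ℚ,
      IsLocalizationFamily n ev ∧
      Function.Injective
        (fun (x : MvPolynomial (Fin n ⊕ Fin n) ℚ ⧸ borelIdeal n)
          (w : Equiv.Perm (Fin n)) => ev w x) :=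
  ⟨BorelQuotient.ev, fun w i => ⟨BorelQuotient.ev_t w i, BorelQuotient.ev_z w i⟩, fun x y hxy =>
    sub_eq_zero.1 <| BorelQuotient.eq_zero_of_forall_ev_eq_zero fun w => by
      rw [map_sub]; exact sub_eq_zero.2 (congrFun hxy w)⟩

/-- For `n ≥ 1`, the localization maps `ev_w : ℚ[t,z]/⟨eₖ(z) − eₖ(t)⟩ → ℚ[t]` (induced by
`tᵢ ↦ tᵢ`, `zᵢ ↦ t_{w(i)}`) are well defined, and the combined ring homomorphism
`L : R/I → ∏_{w ∈ Sₙ} S` whose `w`-th component is `ev_w` is injective. -/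
theorem localization_injective (n : ℕ) (hn : 1 ≤ n) :
    ∃ ev : Equiv.Perm (Fin n) →
      (MvPolynomial (Fin n ⊕ Fin n) ℚ ⧸ borelIdeal n) →ₐ[ℚ] MvPolynomial (Fin n) ℚ,
      IsLocalizationFamily n ev ∧
      Function.Injective
        (fun (x : MvPolynomial (Fin n ⊕ Fin n) ℚ ⧸ borelIdeal n)
          (w : Equiv.Perm (Fin n)) => ev w x) :=
  localization_injective_general n
end

section
/- Fix n ≥ 1. Let S = ℚ[t₁, …, tₙ], R = ℚ[t₁, …, tₙ, z₁, …, zₙ], I ⊆ R the ideal generated by eₖ(z₁, …, zₙ) − eₖ(t₁, …, tₙ) for k = 1, …, n, and for w ∈ Sₙ let ev_w : R/I → S be the ℚ-algebra homomorphism induced by tᵢ ↦ tᵢ and zᵢ ↦ t_{w(i)}. Then for every x ∈ R/I, every u ∈ Sₙ, and all indices i ≠ j, the difference ev_u(x) − ev_{(i j)∘u}(x) lies in the principal ideal of S generated by tᵢ − tⱼ, where (i j)∘u denotes u followed by the transposition of i and j. -/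
/-!
The evaluation `tᵢ ↦ tᵢ, zᵢ ↦ t_{w(i)}` kills `eₖ(z) − eₖ(t)` because `eₖ` is symmetric, so it
descends to `R/I`. Two evaluations of a polynomial are congruent modulo an ideal as soon as they are
congruent on the variables, and the images `t_{u(a)}` and `t_{(i j)(u(a))}` of `z_a` under `ev_u` and
`ev_{(i j)∘u}` differ by `0` or `±(tᵢ − tⱼ)`.
-/

open MvPolynomial

theorem aeval_sub_aeval_mem {σ R A : Type*} [CommRing R] [CommRing A] [Algebra R A]
    (J : Ideal A) {f g : σ → A} (h : ∀ s, f s - g s ∈ J) (p : MvPolynomial σ R) :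
    aeval f p - aeval g p ∈ J := by
  rw [← Ideal.Quotient.eq_zero_iff_mem, map_sub, sub_eq_zero,
    ← Ideal.Quotient.mkₐ_eq_mk R, comp_aeval_apply, comp_aeval_apply]
  congr 2
  exact funext fun s => Ideal.Quotient.eq.mpr (h s)

theorem sub_swap_apply_mem_span {σ A : Type*} [DecidableEq σ] [CommRing A] (f : σ → A)
    (i j a : σ) : f a - f (Equiv.swap i j a) ∈ Ideal.span {f i - f j} := by
  rcases eq_or_ne a i with rfl | hi
  · simp
  rcases eq_or_ne a j with rfl | hj
  · simpa using neg_mem (Ideal.mem_span_singleton_self (f i - f a))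
  simp [Equiv.swap_apply_of_ne_of_ne hi hj]

noncomputable def evalAtPerm (n : ℕ) (w : Equiv.Perm (Fin n)) :
    MvPolynomial (Fin n ⊕ Fin n) ℚ →ₐ[ℚ] MvPolynomial (Fin n) ℚ :=
  aeval (Sum.elim X (X ∘ w))

theorem borelIdeal_le_ker_evalAtPerm (n : ℕ) (w : Equiv.Perm (Fin n)) :
    borelIdeal n ≤ RingHom.ker (evalAtPerm n w) := by
  rw [borelIdeal, Ideal.span_le]
  rintro _ ⟨k, rfl⟩
  rw [SetLike.mem_coe, RingHom.mem_ker, map_sub, evalAtPerm, aeval_rename, aeval_rename,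
    Sum.elim_comp_inl, Sum.elim_comp_inr, ← rename_eq_aeval, rename_esymm, aeval_X_left_apply,
    sub_self]

theorem localization_satisfies_GKM_general (n : ℕ) :
    ∃ ev : Equiv.Perm (Fin n) →
      (MvPolynomial (Fin n ⊕ Fin n) ℚ ⧸ borelIdeal n) →ₐ[ℚ] MvPolynomial (Fin n) ℚ,
      IsLocalizationFamily n ev ∧
      ∀ (x : MvPolynomial (Fin n ⊕ Fin n) ℚ ⧸ borelIdeal n)
        (u : Equiv.Perm (Fin n)) (i j : Fin n), i ≠ j →
        ev u x - ev (Equiv.swap i j * u) x ∈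
          Ideal.span {(X i - X j : MvPolynomial (Fin n) ℚ)} := by
  refine ⟨fun w => Ideal.Quotient.liftₐ _ (evalAtPerm n w) (borelIdeal_le_ker_evalAtPerm n w),
    fun w i => ⟨aeval_X _ _, aeval_X _ _⟩, ?_⟩
  rintro x u i j -
  obtain ⟨p, rfl⟩ := Ideal.Quotient.mk_surjective x
  refine aeval_sub_aeval_mem _ (fun s => ?_) p
  cases s with
  | inl k => simp
  | inr k => exact sub_swap_apply_mem_span X i j (u k)

/-- For `n ≥ 1`, with `ev_w : ℚ[t,z]/⟨eₖ(z) − eₖ(t)⟩ → ℚ[t]` the localization maps (induced by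
`tᵢ ↦ tᵢ`, `zᵢ ↦ t_{w(i)}`): for every `x`, every `u ∈ Sₙ`, and all `i ≠ j`, the difference
`ev_u(x) − ev_{(i j)∘u}(x)` lies in the principal ideal generated by `tᵢ − tⱼ`, i.e., classes in
the image of the localization map satisfy the GKM relations. -/
theorem localization_satisfies_GKM (n : ℕ) (hn : 1 ≤ n) :
    ∃ ev : Equiv.Perm (Fin n) →
      (MvPolynomial (Fin n ⊕ Fin n) ℚ ⧸ borelIdeal n) →ₐ[ℚ] MvPolynomial (Fin n) ℚ,
      IsLocalizationFamily n ev ∧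
      ∀ (x : MvPolynomial (Fin n ⊕ Fin n) ℚ ⧸ borelIdeal n)
        (u : Equiv.Perm (Fin n)) (i j : Fin n), i ≠ j →
        ev u x - ev (Equiv.swap i j * u) x ∈
          Ideal.span {(X i - X j : MvPolynomial (Fin n) ℚ)} :=
  localization_satisfies_GKM_general n
end

section
/- Fix n ≥ 1. Let S = ℚ[t₁, …, tₙ], R = ℚ[t₁, …, tₙ, z₁, …, zₙ], I ⊆ R the ideal generated by eₖ(z₁, …, zₙ) − eₖ(t₁, …, tₙ) for k = 1, …, n, and for w ∈ Sₙ let ev_w : R/I → S be the ℚ-algebra homomorphism induced by tᵢ ↦ tᵢ and zᵢ ↦ t_{w(i)}. Then a function φ : Sₙ → S lies in the image of the localization map L : R/I → ∏_{w ∈ Sₙ} S, x ↦ (ev_w(x))_w, if and only if for every u ∈ Sₙ and all indices i ≠ j the difference φ(u) − φ((i j)∘u) lies in the principal ideal of S generated by tᵢ − tⱼ, where (i j)∘u denotes u followed by the transposition of i and j. -/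
/-! Evaluations `ev_w` and `ev_{(i j) w}` agree once `tᵢ` and `tⱼ` are identified, so every
localized class satisfies the GKM relations. Conversely, for a GKM function `φ` put
`G = ∑_u sign(u) φ(u)(t) ∏_{l < m} (t_{u(m)} − z_l)`. The product vanishes at every fixed point
`w ≠ u` and equals `sign(w) Δ(t)` at `w = u`, where `Δ` is the Vandermonde product, so
`ev_w G = φ(w) Δ(t)`. The GKM relations make `G` vanish under `tᵢ ↦ tⱼ`; hence each prime
`tⱼ − tᵢ` divides `G`, so `Δ(t)` does, and `G / Δ(t)` is a preimage of `φ`. -/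

open MvPolynomial

open Equiv Function Finset Matrix

theorem Function.update_id_swap_apply {α : Type*} [DecidableEq α] (a b c : α) :
    update id a b (Equiv.swap a b c) = update id a b c := by
  rcases eq_or_ne c a with rfl | hca
  · simp [update_apply]
  rcases eq_or_ne c b with rfl | hcb
  · simp [update_apply]
  · rw [swap_apply_of_ne_of_ne hca hcb]

theorem Function.update_id_inl_comp_inl {α β : Type*} [DecidableEq α] [DecidableEq β] (i j : α) :
    update id (Sum.inl i : α ⊕ β) (Sum.inl j) ∘ Sum.inl = Sum.inl ∘ update id i j := by
  rw [update_comp_eq_of_injective _ Sum.inl_injective, comp_update]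
  rfl

theorem Equiv.Perm.sum_sign_smul_eq_zero_of_swap_mul {α M : Type*} [DecidableEq α] [Fintype α]
    [AddCommGroup M] {i j : α} (hij : i ≠ j) {f : Perm α → M}
    (hf : ∀ u, f (Equiv.swap i j * u) = f u) : ∑ u, (Perm.sign u : ℤ) • f u = 0 :=
  Finset.sum_ninvolution (Equiv.swap i j * ·)
    (fun u => by simp [hf, Perm.sign_mul, Perm.sign_swap hij])
    (fun u _ => by simpa [mul_eq_right] using hij)
    (fun _ => mem_univ _) (fun u => by simp [← mul_assoc])

theorem Equiv.Perm.exists_lt_apply_eq_of_ne {α : Type*} [LinearOrder α] [WellFoundedLT α]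
    {u w : Perm α} (h : u ≠ w) : ∃ l m, l < m ∧ u m = w l := by
  obtain ⟨l, hl, hmin⟩ := wellFounded_lt.has_min {k | u k ≠ w k} <| by
    by_contra! hempty
    exact h (Equiv.ext fun k => by simpa using Set.eq_empty_iff_forall_notMem.1 hempty k)
  refine ⟨l, u.symm (w l), ?_, by simp⟩
  rcases lt_trichotomy l (u.symm (w l)) with hlt | heq | hgt
  · exact hlt
  · exact absurd (u.eq_symm_apply.1 heq) hl
  · have : u (u.symm (w l)) = w (u.symm (w l)) := by simpa using mt (hmin _) (not_not.2 hgt)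
    rw [apply_symm_apply, w.injective.eq_iff] at this
    exact absurd this.symm hgt.ne

namespace MvPolynomial

variable {R σ : Type*} [CommRing R] [DecidableEq σ]

theorem mkₐ_comp_rename_update_id (a b : σ) :
    (Ideal.Quotient.mkₐ R (Ideal.span {(X a - X b : MvPolynomial σ R)})).comp
      (rename (update id a b)) = Ideal.Quotient.mkₐ R _ := by
  ext v
  rcases eq_or_ne v a with rfl | hva
  · simp only [AlgHom.comp_apply, rename_X, update_self, Ideal.Quotient.mkₐ_eq_mk,
      Ideal.Quotient.eq]
    convert neg_mem (Ideal.mem_span_singleton_self (X v - X b : MvPolynomial σ R)) using 1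
    ring
  · simp [hva]

theorem ker_rename_update_id (a b : σ) :
    RingHom.ker (rename (R := R) (update id a b)) = Ideal.span {X a - X b} := by
  refine le_antisymm (fun p hp => ?_) ?_
  · rw [← Ideal.Quotient.eq_zero_iff_mem, ← Ideal.Quotient.mkₐ_eq_mk R,
      ← mkₐ_comp_rename_update_id, AlgHom.comp_apply, RingHom.mem_ker.1 hp, map_zero]
  · rw [Ideal.span_singleton_le_iff_mem, RingHom.mem_ker]
    simp [update_apply]

theorem mem_span_X_sub_X_iff {a b : σ} {p : MvPolynomial σ R} :
    p ∈ Ideal.span {X a - X b} ↔ rename (update id a b) p = 0 := by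
  rw [← ker_rename_update_id, RingHom.mem_ker]

theorem prime_X_sub_X [IsDomain R] {a b : σ} (hab : a ≠ b) :
    Prime (X a - X b : MvPolynomial σ R) := by
  rw [← Ideal.span_singleton_prime (sub_ne_zero.2 ((X_injective (R := R)).ne hab)),
    ← ker_rename_update_id]
  exact RingHom.ker_isPrime _

theorem X_sub_X_dvd_X_sub_X_iff [Nontrivial R] {a b c d : σ} (hcd : c ≠ d) :
    (X a - X b : MvPolynomial σ R) ∣ X c - X d ↔ a = c ∧ b = d ∨ a = d ∧ b = c := by
  refine ⟨fun h => ?_, ?_⟩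
  · rw [← Ideal.mem_span_singleton, mem_span_X_sub_X_iff] at h
    simp only [map_sub, rename_X, sub_eq_zero, X_inj, update_apply, id] at h
    split_ifs at h <;> grind
  · rintro (⟨rfl, rfl⟩ | ⟨rfl, rfl⟩)
    · exact dvd_rfl
    · exact ⟨-1, by ring⟩

theorem det_vandermonde_X_dvd [IsDomain R] [UniqueFactorizationMonoid R] {n : ℕ} {v : Fin n → σ}
    (hv : Injective v) {p : MvPolynomial σ R} (hp : ∀ i j, i < j → X (v j) - X (v i) ∣ p) :
    (vandermonde fun i => (X (v i) : MvPolynomial σ R)).det ∣ p := by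
  rw [det_vandermonde, prod_sigma']
  refine prod_dvd_of_isRelPrime (fun x hx y hy hxy => ?_) fun x hx => hp _ _ (by simpa using hx)
  simp only [coe_sigma, Set.mem_sigma_iff, coe_univ, Set.mem_univ, coe_Ioi, Set.mem_Ioi,
    true_and] at hx hy
  refine ((prime_X_sub_X (hv.ne hx.ne')).irreducible.isRelPrime_iff_not_dvd).2 fun hdvd => ?_
  rcases (X_sub_X_dvd_X_sub_X_iff (hv.ne hy.ne')).1 hdvd with ⟨h2, h1⟩ | ⟨h2, h1⟩
  · exact hxy (Sigma.ext (hv h1) (heq_of_eq (hv h2)))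
  · rw [hv h1, hv h2] at hx
    exact lt_asymm hx hy

end MvPolynomial

section Localization

variable {R : Type*} [CommRing R] {n : ℕ}

noncomputable def evPerm (w : Perm (Fin n)) :
    MvPolynomial (Fin n ⊕ Fin n) R →ₐ[R] MvPolynomial (Fin n) R :=
  aeval (Sum.elim X fun i => X (w i))

@[simp]
theorem evPerm_X_inl (w : Perm (Fin n)) (i : Fin n) :
    evPerm w (X (Sum.inl i) : MvPolynomial (Fin n ⊕ Fin n) R) = X i := by
  simp [evPerm]

@[simp]
theorem evPerm_X_inr (w : Perm (Fin n)) (i : Fin n) :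
    evPerm w (X (Sum.inr i) : MvPolynomial (Fin n ⊕ Fin n) R) = X (w i) := by
  simp [evPerm]

@[simp]
theorem evPerm_rename_inl (w : Perm (Fin n)) (p : MvPolynomial (Fin n) R) :
    evPerm w (rename Sum.inl p) = p := by
  rw [evPerm, aeval_rename, Sum.elim_comp_inl, aeval_X_left_apply]

theorem borelIdeal_le_ker_evPerm (w : Perm (Fin n)) :
    borelIdeal n ≤ RingHom.ker (evPerm (R := ℚ) w) := by
  rw [borelIdeal, Ideal.span_le]
  rintro _ ⟨k, rfl⟩
  have : evPerm w (rename Sum.inr (esymm (Fin n) ℚ (k + 1))) = esymm (Fin n) ℚ (k + 1) := by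
    rw [evPerm, aeval_rename, Sum.elim_comp_inr]
    simpa [rename_eq_aeval, comp_def] using rename_esymm (Fin n) ℚ (k + 1) w
  simp [this]

def IsGKM (φ : Perm (Fin n) → MvPolynomial (Fin n) R) : Prop :=
  ∀ (u : Perm (Fin n)) (i j : Fin n), i ≠ j →
    φ u - φ (Equiv.swap i j * u) ∈ Ideal.span {(X i - X j : MvPolynomial (Fin n) R)}

theorem rename_update_id_evPerm_swap_mul (u : Perm (Fin n)) (i j : Fin n)
    (p : MvPolynomial (Fin n ⊕ Fin n) R) :
    rename (update id i j) (evPerm (Equiv.swap i j * u) p) =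
      rename (update id i j) (evPerm u p) := by
  rw [← AlgHom.comp_apply, ← AlgHom.comp_apply]
  congr 1
  ext (k | k) <;> simp [update_id_swap_apply]

theorem isGKM_evPerm (p : MvPolynomial (Fin n ⊕ Fin n) R) : IsGKM fun w => evPerm w p :=
  fun u i j _ => by
    rw [mem_span_X_sub_X_iff, map_sub, rename_update_id_evPerm_swap_mul, sub_self]

noncomputable def pointClass (u : Perm (Fin n)) : MvPolynomial (Fin n ⊕ Fin n) R :=
  ∏ l, ∏ m ∈ Ioi l, (X (Sum.inl (u m)) - X (Sum.inr l))

theorem evPerm_pointClass_of_ne {u w : Perm (Fin n)} (h : u ≠ w) :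
    evPerm w (pointClass u : MvPolynomial (Fin n ⊕ Fin n) R) = 0 := by
  obtain ⟨l, m, hlm, hum⟩ := Perm.exists_lt_apply_eq_of_ne h
  rw [pointClass, map_prod]
  refine prod_eq_zero (mem_univ l) ?_
  rw [map_prod]
  exact prod_eq_zero (mem_Ioi.2 hlm) (by simp [hum])

theorem evPerm_pointClass_self (w : Perm (Fin n)) :
    evPerm w (pointClass w : MvPolynomial (Fin n ⊕ Fin n) R) =
      (Perm.sign w : ℤ) • (vandermonde (X : Fin n → MvPolynomial (Fin n) R)).det := by
  have : evPerm w (pointClass w : MvPolynomial (Fin n ⊕ Fin n) R) =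
      ((vandermonde X).submatrix w id).det := by
    simp [pointClass, ← det_vandermonde, vandermonde, submatrix]
  rw [this, det_permute, zsmul_eq_mul]

noncomputable def interpolant (φ : Perm (Fin n) → MvPolynomial (Fin n) R) :
    MvPolynomial (Fin n ⊕ Fin n) R :=
  ∑ u, (Perm.sign u : ℤ) • (rename Sum.inl (φ u) * pointClass u)

theorem evPerm_interpolant (φ : Perm (Fin n) → MvPolynomial (Fin n) R) (w : Perm (Fin n)) :
    evPerm w (interpolant φ) = φ w * (vandermonde (X : Fin n → MvPolynomial (Fin n) R)).det := by
  rw [interpolant, map_sum, sum_eq_single w]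
  · rw [map_zsmul, map_mul, evPerm_rename_inl, evPerm_pointClass_self, mul_smul_comm, smul_smul,
      Int.units_coe_mul_self, one_smul]
  · intro u _ hu
    rw [map_zsmul, map_mul, evPerm_pointClass_of_ne hu, mul_zero, smul_zero]
  · simp

theorem rename_update_id_pointClass_swap_mul (u : Perm (Fin n)) (i j : Fin n) :
    rename (update id (Sum.inl i) (Sum.inl j))
        (pointClass (Equiv.swap i j * u) : MvPolynomial _ R) =
      rename (update id (Sum.inl i) (Sum.inl j)) (pointClass u) := by
  have hτ (k : Fin n) : update id (Sum.inl i : Fin n ⊕ Fin n) (Sum.inl j) (Sum.inl k) =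
      Sum.inl (update id i j k) :=
    congrFun (update_id_inl_comp_inl i j) k
  simp only [pointClass, map_prod, map_sub, rename_X, Perm.mul_apply, hτ, update_id_swap_apply]

theorem rename_update_id_interpolant {φ : Perm (Fin n) → MvPolynomial (Fin n) R} (hφ : IsGKM φ)
    {i j : Fin n} (hij : i ≠ j) :
    rename (update id (Sum.inl i : Fin n ⊕ Fin n) (Sum.inl j)) (interpolant φ) = 0 := by
  simp only [interpolant, map_sum, map_zsmul, map_mul, rename_rename, update_id_inl_comp_inl]
  refine Perm.sum_sign_smul_eq_zero_of_swap_mul hij fun u => ?_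
  have hφu := mem_span_X_sub_X_iff.1 (hφ u i j hij)
  rw [map_sub, sub_eq_zero] at hφu
  rw [← rename_rename (update id i j) Sum.inl, ← rename_rename (update id i j) Sum.inl, ← hφu,
    rename_update_id_pointClass_swap_mul]

@[simp]
theorem evPerm_det_vandermonde_X_inl (w : Perm (Fin n)) :
    evPerm w (vandermonde fun i => (X (Sum.inl i) : MvPolynomial (Fin n ⊕ Fin n) R)).det =
      (vandermonde (X : Fin n → MvPolynomial (Fin n) R)).det := by
  simp [det_vandermonde]

theorem det_vandermonde_X_inl_dvd_interpolant [IsDomain R] [UniqueFactorizationMonoid R]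
    {φ : Perm (Fin n) → MvPolynomial (Fin n) R} (hφ : IsGKM φ) :
    (vandermonde fun i => (X (Sum.inl i) : MvPolynomial (Fin n ⊕ Fin n) R)).det ∣
      interpolant φ :=
  det_vandermonde_X_dvd Sum.inl_injective fun _ _ hij =>
    Ideal.mem_span_singleton.1 (mem_span_X_sub_X_iff.2 (rename_update_id_interpolant hφ hij.ne'))

end Localization

theorem localization_image_iff_GKM_general (n : ℕ) :
    ∃ ev : Equiv.Perm (Fin n) →
      (MvPolynomial (Fin n ⊕ Fin n) ℚ ⧸ borelIdeal n) →ₐ[ℚ] MvPolynomial (Fin n) ℚ,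
      IsLocalizationFamily n ev ∧
      ∀ φ : Equiv.Perm (Fin n) → MvPolynomial (Fin n) ℚ,
        (∃ x : MvPolynomial (Fin n ⊕ Fin n) ℚ ⧸ borelIdeal n, ∀ w, ev w x = φ w) ↔
        (∀ (u : Equiv.Perm (Fin n)) (i j : Fin n), i ≠ j →
          φ u - φ (Equiv.swap i j * u) ∈
            Ideal.span {(X i - X j : MvPolynomial (Fin n) ℚ)}) := by
  let ev w := Ideal.Quotient.liftₐ (borelIdeal n) (evPerm w) (borelIdeal_le_ker_evPerm w)
  have ev_mk (w) (p) : ev w (Ideal.Quotient.mk _ p) = evPerm w p := rfl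
  refine ⟨ev, fun w i => by simp [ev_mk], fun φ => ⟨?_, fun hφ => ?_⟩⟩
  · rintro ⟨x, hx⟩
    obtain ⟨p, rfl⟩ := Ideal.Quotient.mk_surjective x
    obtain rfl : (fun w => evPerm w p) = φ := funext hx
    exact isGKM_evPerm p
  · obtain ⟨q, hq⟩ := det_vandermonde_X_inl_dvd_interpolant hφ
    have hΔ := det_vandermonde_ne_zero_iff.2 (X_injective (σ := Fin n) (R := ℚ))
    refine ⟨Ideal.Quotient.mk _ q, fun w => mul_left_cancel₀ hΔ ?_⟩
    calc _ = evPerm w ((vandermonde fun i => X (Sum.inl i)).det * q) := by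
          rw [ev_mk, map_mul, evPerm_det_vandermonde_X_inl]
      _ = _ := by rw [← hq, evPerm_interpolant, mul_comm]

/-- Goresky–Kottwitz–MacPherson description of the image of the localization map: for `n ≥ 1`, a
function `φ : Sₙ → ℚ[t]` lies in the image of `L : R/I → ∏_{w} S`, `x ↦ (ev_w x)_w`, if and only
if `φ(u) − φ((i j)∘u) ∈ ⟨tᵢ − tⱼ⟩` for all `u ∈ Sₙ` and all `i ≠ j`. -/
theorem localization_image_iff_GKM (n : ℕ) (hn : 1 ≤ n) :
    ∃ ev : Equiv.Perm (Fin n) →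
      (MvPolynomial (Fin n ⊕ Fin n) ℚ ⧸ borelIdeal n) →ₐ[ℚ] MvPolynomial (Fin n) ℚ,
      IsLocalizationFamily n ev ∧
      ∀ φ : Equiv.Perm (Fin n) → MvPolynomial (Fin n) ℚ,
        (∃ x : MvPolynomial (Fin n ⊕ Fin n) ℚ ⧸ borelIdeal n, ∀ w, ev w x = φ w) ↔
        (∀ (u : Equiv.Perm (Fin n)) (i j : Fin n), i ≠ j →
          φ u - φ (Equiv.swap i j * u) ∈
            Ideal.span {(X i - X j : MvPolynomial (Fin n) ℚ)}) :=
  localization_image_iff_GKM_general n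
end

section
/- Fix n ≥ 1. Let S = ℤ[t₁^{±1}, …, tₙ^{±1}], R = ℤ[t₁^{±1}, …, tₙ^{±1}, z₁^{±1}, …, zₙ^{±1}], I ⊆ R the ideal generated by eₖ(z₁, …, zₙ) − eₖ(t₁, …, tₙ) for k = 1, …, n, and for w ∈ Sₙ let ev_w : R/I → S be the ring homomorphism induced by tᵢ ↦ tᵢ and zᵢ ↦ t_{w(i)}. Then for every x ∈ R/I, every u ∈ Sₙ, and all indices i ≠ j, the difference ev_u(x) − ev_{(i j)∘u}(x) lies in the principal ideal of S generated by 1 − tᵢ tⱼ^{−1}, where (i j)∘u denotes u followed by the transposition of i and j. -/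
/-! The localization map `ev_w` is induced by the monomial map `t^a z^b ↦ t^(a + b ∘ w⁻¹)` of group
algebras, which kills `I` because `eₖ(t_{w(1)}, …, t_{w(n)}) = eₖ(t₁, …, tₙ)`. On a monomial, the
exponents obtained from `u` and from `(i j) ∘ u` differ by an integer multiple `m • (eᵢ − eⱼ)`, so the
two images differ by a monomial times `1 − (tᵢ tⱼ⁻¹)^m`, which is divisible by `1 − tᵢ tⱼ⁻¹` because
`tᵢ tⱼ⁻¹` is a unit. -/

/-- The `k`-th elementary symmetric polynomial of a finite family `v` of elements of a
commutative ring. -/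
noncomputable def esymmOf {ι R : Type*} [Fintype ι] [CommRing R] (v : ι → R) (k : ℕ) : R :=
  ∑ A ∈ Finset.powersetCard k (Finset.univ : Finset ι), ∏ i ∈ A, v i

/-- The Laurent polynomial ring `ℤ[t₁^{±1},…,tₙ^{±1}]`, realized as the group algebra of `ℤⁿ`
over `ℤ`. -/
abbrev LaurentS (n : ℕ) : Type := AddMonoidAlgebra ℤ (Fin n → ℤ)

/-- The Laurent polynomial ring `ℤ[t₁^{±1},…,tₙ^{±1},z₁^{±1},…,zₙ^{±1}]`. -/
abbrev LaurentR (n : ℕ) : Type := AddMonoidAlgebra ℤ (Fin n ⊕ Fin n → ℤ)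

/-- The Laurent variable `tᵢ` in `ℤ[t₁^{±1},…,tₙ^{±1}]`. -/
noncomputable def tS {n : ℕ} (i : Fin n) : LaurentS n :=
  AddMonoidAlgebra.single (Pi.single i 1) 1

/-- The inverse Laurent variable `tᵢ⁻¹` in `ℤ[t₁^{±1},…,tₙ^{±1}]`. -/
noncomputable def tSinv {n : ℕ} (i : Fin n) : LaurentS n :=
  AddMonoidAlgebra.single (Pi.single i (-1)) 1

/-- The Laurent variable `tᵢ` in `ℤ[t^{±1},z^{±1}]`. -/
noncomputable def tR {n : ℕ} (i : Fin n) : LaurentR n :=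
  AddMonoidAlgebra.single (Pi.single (Sum.inl i) 1) 1

/-- The Laurent variable `zᵢ` in `ℤ[t^{±1},z^{±1}]`. -/
noncomputable def zR {n : ℕ} (i : Fin n) : LaurentR n :=
  AddMonoidAlgebra.single (Pi.single (Sum.inr i) 1) 1

/-- The ideal of `ℤ[t^{±1},z^{±1}]` generated by `eₖ(z) − eₖ(t)` for `k = 1, …, n`. -/
noncomputable def borelIdealK (n : ℕ) : Ideal (LaurentR n) :=
  Ideal.span (Set.range fun k : Fin n =>
    esymmOf zR ((k : ℕ) + 1) - esymmOf tR ((k : ℕ) + 1))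

/-- `ev` is the family of localization maps: for each permutation `w`, `ev w` is the ring
homomorphism `R/I → S` induced by `tᵢ ↦ tᵢ` and `zᵢ ↦ t_{w(i)}`. -/
def IsLocalizationFamilyK (n : ℕ)
    (ev : Equiv.Perm (Fin n) → (LaurentR n ⧸ borelIdealK n) →+* LaurentS n) : Prop :=
  ∀ (w : Equiv.Perm (Fin n)) (i : Fin n),
    ev w (Ideal.Quotient.mk (borelIdealK n) (tR i)) = tS i ∧
    ev w (Ideal.Quotient.mk (borelIdealK n) (zR i)) = tS (w i)

theorem MonoidHom.one_sub_map_dvd_one_sub_map_zpow {G R : Type*} [Group G] [CommRing R]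
    (χ : G →* R) (g : G) (m : ℤ) : 1 - χ g ∣ 1 - χ (g ^ m) := by
  induction m using Int.induction_on with
  | zero => simp
  | succ m ih =>
    rw [zpow_add_one, map_mul]
    have hsplit : 1 - χ (g ^ (m : ℤ)) * χ g = (1 - χ (g ^ (m : ℤ))) + χ (g ^ (m : ℤ)) * (1 - χ g) := by
      ring
    rw [hsplit]
    exact dvd_add ih (dvd_mul_left _ _)
  | pred m ih =>
    have hinv : χ g⁻¹ * χ g = 1 := by rw [← map_mul, inv_mul_cancel, map_one]
    rw [zpow_sub_one, map_mul]
    have hsplit : 1 - χ (g ^ (-(m : ℤ))) * χ g⁻¹ =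
        (1 - χ (g ^ (-(m : ℤ)))) - χ (g ^ (-(m : ℤ))) * χ g⁻¹ * (1 - χ g) := by
      linear_combination -χ (g ^ (-(m : ℤ))) * hinv
    rw [hsplit]
    exact dvd_sub ih (dvd_mul_left _ _)

namespace AddMonoidAlgebra

variable {k G : Type*} [CommRing k]

theorem single_add_zsmul_sub_single_mem_span [AddCommGroup G] (g v : G) (m : ℤ) (c : k) :
    single (g + m • v) c - single g c ∈ Ideal.span {1 - single v (1 : k)} := by
  have hdvd : 1 - single v (1 : k) ∣ 1 - single (m • v) 1 := by
    simpa [of_apply] using (of k G).one_sub_map_dvd_one_sub_map_zpow (Multiplicative.ofAdd v) m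
  have hfactor : single (g + m • v) c - single g c = -(single g c * (1 - single (m • v) 1)) := by
    rw [mul_sub, mul_one, single_mul_single, mul_one]
    ring
  rw [Ideal.mem_span_singleton, hfactor, dvd_neg]
  exact dvd_mul_of_dvd_right hdvd _

theorem mapDomainRingHom_sub_mem_span {H : Type*} [AddCommMonoid G] [AddCommGroup H]
    (f₁ f₂ : G →+ H) (v : H) (h : ∀ g, ∃ m : ℤ, f₁ g = f₂ g + m • v) (r : k[G]) :
    mapDomainRingHom k f₁ r - mapDomainRingHom k f₂ r ∈ Ideal.span {1 - single v (1 : k)} := by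
  induction r using induction_linear with
  | zero => simp
  | add r s hr hs =>
    simpa only [map_add, add_sub_add_comm] using add_mem hr hs
  | single g c =>
    obtain ⟨m, hm⟩ := h g
    simpa [mapDomain_single, hm] using single_add_zsmul_sub_single_mem_span (f₂ g) v m c

end AddMonoidAlgebra

theorem esymmOf_eq_esymm {ι R : Type*} [Fintype ι] [CommRing R] (v : ι → R) (k : ℕ) :
    esymmOf v k = (Finset.univ.val.map v).esymm k :=
  (Finset.esymm_map_val v _ k).symm

theorem esymmOf_comp_perm {ι R : Type*} [Fintype ι] [CommRing R] (v : ι → R)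
    (w : Equiv.Perm ι) (k : ℕ) : esymmOf (v ∘ w) k = esymmOf v k := by
  rw [esymmOf_eq_esymm, esymmOf_eq_esymm, ← Multiset.map_map, Multiset.map_univ_val_equiv]

theorem map_esymmOf {ι R S : Type*} [Fintype ι] [CommRing R] [CommRing S] (φ : R →+* S)
    (v : ι → R) (k : ℕ) : φ (esymmOf v k) = esymmOf (φ ∘ v) k := by
  simp only [esymmOf, map_sum, map_prod, Function.comp_apply]

theorem Pi.sub_comp_swap {α R : Type*} [DecidableEq α] [Ring R] (g : α → R) {i j : α}
    (hij : i ≠ j) : g - g ∘ Equiv.swap i j = (g i - g j) • (Pi.single i 1 - Pi.single j 1) := by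
  ext a
  rcases eq_or_ne a i with rfl | hai
  · simp [hij]
  rcases eq_or_ne a j with rfl | haj
  · simp [hij.symm]
  simp [Equiv.swap_apply_of_ne_of_ne hai haj, hai, haj]

theorem tS_mul_tSinv {n : ℕ} (i j : Fin n) :
    tS i * tSinv j = AddMonoidAlgebra.single (Pi.single i 1 - Pi.single j 1) 1 := by
  rw [tS, tSinv, AddMonoidAlgebra.single_mul_single, mul_one, Pi.single_neg, ← sub_eq_add_neg]

section

variable {n : ℕ}

def fixedPointExp (w : Equiv.Perm (Fin n)) : (Fin n ⊕ Fin n → ℤ) →+ (Fin n → ℤ) where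
  toFun f := f ∘ Sum.inl + f ∘ Sum.inr ∘ w.symm
  map_zero' := rfl
  map_add' f g := by ext; simp only [Pi.add_apply, Function.comp_apply]; abel

noncomputable def fixedPointEvalR (w : Equiv.Perm (Fin n)) : LaurentR n →+* LaurentS n :=
  AddMonoidAlgebra.mapDomainRingHom ℤ (fixedPointExp w)

theorem fixedPointEvalR_single (w : Equiv.Perm (Fin n)) (f : Fin n ⊕ Fin n → ℤ) (c : ℤ) :
    fixedPointEvalR w (AddMonoidAlgebra.single f c) =
      AddMonoidAlgebra.single (fixedPointExp w f) c := by
  simp [fixedPointEvalR, AddMonoidAlgebra.mapDomain_single]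

theorem fixedPointEvalR_tR (w : Equiv.Perm (Fin n)) (i : Fin n) :
    fixedPointEvalR w (tR i) = tS i := by
  rw [tR, tS, fixedPointEvalR_single]
  congr 1
  ext a
  simp [fixedPointExp, Pi.single_apply]

theorem fixedPointEvalR_zR (w : Equiv.Perm (Fin n)) (i : Fin n) :
    fixedPointEvalR w (zR i) = tS (w i) := by
  rw [zR, tS, fixedPointEvalR_single]
  congr 1
  ext a
  simp [fixedPointExp, Pi.single_apply, Equiv.symm_apply_eq]

theorem borelIdealK_le_ker_fixedPointEvalR (w : Equiv.Perm (Fin n)) :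
    borelIdealK n ≤ RingHom.ker (fixedPointEvalR w) := by
  rw [borelIdealK, Ideal.span_le]
  rintro _ ⟨k, rfl⟩
  have hz : fixedPointEvalR w ∘ zR = tS ∘ w := funext (fixedPointEvalR_zR w)
  have ht : fixedPointEvalR w ∘ tR = tS := funext (fixedPointEvalR_tR w)
  simp only [SetLike.mem_coe, RingHom.mem_ker, map_sub, map_esymmOf, hz, ht,
    esymmOf_comp_perm, sub_self]

noncomputable def fixedPointEval (w : Equiv.Perm (Fin n)) :
    (LaurentR n ⧸ borelIdealK n) →+* LaurentS n :=
  Ideal.Quotient.lift (borelIdealK n) (fixedPointEvalR w) (borelIdealK_le_ker_fixedPointEvalR w)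

theorem isLocalizationFamilyK_fixedPointEval : IsLocalizationFamilyK n fixedPointEval :=
  fun w i => ⟨fixedPointEvalR_tR w i, fixedPointEvalR_zR w i⟩

theorem fixedPointExp_eq_swap_mul_add (u : Equiv.Perm (Fin n)) {i j : Fin n} (hij : i ≠ j)
    (f : Fin n ⊕ Fin n → ℤ) :
    fixedPointExp u f = fixedPointExp (Equiv.swap i j * u) f +
      (f (Sum.inr (u.symm i)) - f (Sum.inr (u.symm j))) • (Pi.single i 1 - Pi.single j 1) := by
  rw [← sub_eq_iff_eq_add']
  have hswap := Pi.sub_comp_swap (f ∘ Sum.inr ∘ u.symm) hij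
  simp only [Function.comp_apply] at hswap
  rw [← hswap]
  ext a
  simp [fixedPointExp, Equiv.Perm.mul_def]

theorem fixedPointEvalR_sub_swap_mem_span (u : Equiv.Perm (Fin n)) {i j : Fin n} (hij : i ≠ j)
    (r : LaurentR n) :
    fixedPointEvalR u r - fixedPointEvalR (Equiv.swap i j * u) r ∈
      Ideal.span {(1 - tS i * tSinv j : LaurentS n)} := by
  rw [tS_mul_tSinv]
  exact AddMonoidAlgebra.mapDomainRingHom_sub_mem_span _ _ _
    (fun f => ⟨_, fixedPointExp_eq_swap_mul_add u hij f⟩) r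

end

theorem localization_satisfies_GKM_K_general (n : ℕ) :
    ∃ ev : Equiv.Perm (Fin n) → (LaurentR n ⧸ borelIdealK n) →+* LaurentS n,
      IsLocalizationFamilyK n ev ∧
      ∀ (x : LaurentR n ⧸ borelIdealK n) (u : Equiv.Perm (Fin n)) (i j : Fin n), i ≠ j →
        ev u x - ev (Equiv.swap i j * u) x ∈
          Ideal.span {(1 - tS i * tSinv j : LaurentS n)} := by
  refine ⟨fixedPointEval, isLocalizationFamilyK_fixedPointEval, fun x u i j hij => ?_⟩
  obtain ⟨r, rfl⟩ := Ideal.Quotient.mk_surjective x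
  exact fixedPointEvalR_sub_swap_mem_span u hij r

/-- For `n ≥ 1`, with `ev_w : ℤ[t^{±1},z^{±1}]/⟨eₖ(z) − eₖ(t)⟩ → ℤ[t^{±1}]` the localization
maps (induced by `tᵢ ↦ tᵢ`, `zᵢ ↦ t_{w(i)}`): for every `x`, every `u ∈ Sₙ`, and all `i ≠ j`,
the difference `ev_u(x) − ev_{(i j)∘u}(x)` lies in the principal ideal generated by
`1 − tᵢ tⱼ⁻¹`, i.e., classes in the image of the localization map satisfy the `K`-theoretic GKM
relations. -/
theorem localization_satisfies_GKM_K (n : ℕ) (hn : 1 ≤ n) :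
    ∃ ev : Equiv.Perm (Fin n) → (LaurentR n ⧸ borelIdealK n) →+* LaurentS n,
      IsLocalizationFamilyK n ev ∧
      ∀ (x : LaurentR n ⧸ borelIdealK n) (u : Equiv.Perm (Fin n)) (i j : Fin n), i ≠ j →
        ev u x - ev (Equiv.swap i j * u) x ∈
          Ideal.span {(1 - tS i * tSinv j : LaurentS n)} :=
  localization_satisfies_GKM_K_general n
end
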